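/- arXiv:2109.08436 — 3 statements merged into one kernel-verified Lean document; each statement's English description precedes it below -/
import Mathlib

section
/- Let θ > 1 and let ω : (0,∞) → [1,∞) be a non-increasing function with ∫_0^1 t^{-1} ω(t)^{-1/(θ-1)} dt = ∞. Then there exists a measurable function f : (0,1) → [0,∞) such that ∫_0^1 f(t) dt = ∞ while ∫_0^1 f(t)^θ t^{θ-1} ω(t) dt < ∞. Moreover, for every t_0 ∈ (0,1) one has ∫_0^{t_0} f(t) dt = ∞. -/
open MeasureTheory Set
open scoped ENNReal

/-- Real algebra: the key exponent cancellation. -/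
lemma stmt5_alg {θ : ℝ} (hθ : 1 < θ) {t W c : ℝ} (ht : 0 < t) (hW : 1 ≤ W) (hc : 0 ≤ c) :
    (c * (t⁻¹ * W ^ (-(1/(θ-1)))))^θ * t^(θ-1) * W
      = c ^ θ * (t⁻¹ * W ^ (-(1/(θ-1)))) := by
  have hW0 : 0 < W := lt_of_lt_of_le one_pos hW
  set σ : ℝ := 1/(θ-1) with hσ
  have hθ1 : θ - 1 ≠ 0 := sub_ne_zero_of_ne (ne_of_gt hθ)
  have h1 : (t⁻¹ : ℝ) = t ^ (-1 : ℝ) := by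
    rw [Real.rpow_neg_one]
  have hWσ : (0:ℝ) ≤ W ^ (-σ) := Real.rpow_nonneg hW0.le _
  have expand : (c * (t⁻¹ * W ^ (-σ)))^θ = c ^ θ * (t ^ (-1:ℝ)) ^ θ * (W ^ (-σ)) ^ θ := by
    rw [Real.mul_rpow hc (by positivity), Real.mul_rpow (by positivity) hWσ, h1, mul_assoc]
  have e1 : ((t:ℝ) ^ (-1:ℝ)) ^ θ = t ^ ((-1:ℝ) * θ) := (Real.rpow_mul ht.le _ _).symm
  have e2 : ((W:ℝ) ^ (-σ)) ^ θ = W ^ (-σ * θ) := (Real.rpow_mul hW0.le _ _).symm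
  have e3 : (t ^ ((-1:ℝ) * θ) : ℝ) * t ^ (θ - 1) = t ^ (-1:ℝ) := by
    rw [← Real.rpow_add ht]; congr 1; ring
  have e4 : (W ^ (-σ * θ) : ℝ) * W = W ^ (-σ) := by
    rw [← Real.rpow_add_one hW0.ne']
    congr 1
    rw [hσ]
    field_simp
    ring
  rw [expand, e1, e2, h1]
  calc c ^ θ * t ^ ((-1:ℝ) * θ) * W ^ (-σ * θ) * t ^ (θ-1) * W
      = c ^ θ * ((t ^ ((-1:ℝ) * θ) * t ^ (θ-1)) * (W ^ (-σ * θ) * W)) := by ring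
    _ = c ^ θ * (t ^ (-1:ℝ) * W ^ (-σ)) := by rw [e3, e4]

/-- Let `θ > 1` and `ω : (0,∞) → [1,∞)` be non-increasing with
`∫₀¹ t⁻¹ ω(t)^{-1/(θ-1)} dt = ∞`. Then there is a measurable
`f : (0,1) → [0,∞)` with `∫₀¹ f = ∞` while `∫₀¹ f(t)^θ t^{θ-1} ω(t) dt < ∞`;
moreover `∫₀^{t₀} f = ∞` for every `t₀ ∈ (0,1)`. -/
theorem stmt5 (θ : ℝ) (hθ : 1 < θ) (w : ℝ → ℝ)
    (hw1 : ∀ t > (0:ℝ), 1 ≤ w t) (hmono : AntitoneOn w (Ioi 0))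
    (hdiv : (∫⁻ t in Ioo (0:ℝ) 1,
      ENNReal.ofReal (t⁻¹ * (w t) ^ (-(1/(θ-1))))) = ⊤) :
    ∃ f : ℝ → ℝ, Measurable f ∧ (∀ t, 0 ≤ f t) ∧
      (∫⁻ t in Ioo (0:ℝ) 1, ENNReal.ofReal (f t)) = ⊤ ∧
      (∫⁻ t in Ioo (0:ℝ) 1,
        ENNReal.ofReal ((f t) ^ θ * t ^ (θ - 1) * w t)) < ⊤ ∧
      ∀ t0 ∈ Ioo (0:ℝ) 1,
        (∫⁻ t in Ioo (0:ℝ) t0, ENNReal.ofReal (f t)) = ⊤ := by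
  classical
  set σ : ℝ := 1/(θ-1) with hσdef
  have hθ1 : (0:ℝ) < θ - 1 := by linarith
  -- measurable modification of w
  have hwae : AEMeasurable w (volume.restrict (Ioi 0)) :=
    aemeasurable_restrict_of_antitoneOn measurableSet_Ioi hmono
  set w' : ℝ → ℝ := fun t => max (hwae.mk w t) 1 with hw'def
  have hw'meas : Measurable w' := hwae.measurable_mk.max measurable_const
  have hw'1 : ∀ t, 1 ≤ w' t := fun t => le_max_right _ _
  have hw'pos : ∀ t, 0 < w' t := fun t => lt_of_lt_of_le one_pos (hw'1 t)
  have hw'w : ∀ᵐ t ∂(volume.restrict (Ioi 0)), w' t = w t := by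
    filter_upwards [hwae.ae_eq_mk, ae_restrict_mem measurableSet_Ioi] with t h1 h2
    rw [hw'def]; simp only [← h1]
    exact max_eq_left (hw1 t h2)
  -- the density G and measure μ
  set G : ℝ → ℝ≥0∞ := fun t => ENNReal.ofReal (t⁻¹ * w' t ^ (-σ)) with hGdef
  have hWmeas : Measurable (fun t => w' t ^ (-σ)) := by
    have : (fun t => w' t ^ (-σ)) = fun t => Real.exp (Real.log (w' t) * (-σ)) := by
      funext t; exact Real.rpow_def_of_pos (hw'pos t) _
    rw [this]
    exact Real.measurable_exp.comp ((Real.measurable_log.comp hw'meas).mul measurable_const)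
  have hGmeas : Measurable G := (measurable_inv.mul hWmeas).ennreal_ofReal
  set ν : Measure ℝ := volume.restrict (Ioo 0 1) with hνdef
  set μ : Measure ℝ := ν.withDensity G with hμdef
  -- pointwise bound on G
  have hGle : ∀ x : ℝ, 0 < x → ∀ t ∈ Ioi x, G t ≤ ENNReal.ofReal x⁻¹ := by
    intro x hx t ht
    have htpos : 0 < t := lt_trans hx ht
    apply ENNReal.ofReal_le_ofReal
    calc t⁻¹ * w' t ^ (-σ) ≤ t⁻¹ * 1 := by
          apply mul_le_mul_of_nonneg_left _ (inv_nonneg.2 htpos.le)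
          exact Real.rpow_le_one_of_one_le_of_nonpos (hw'1 t)
            (by rw [neg_nonpos]; positivity)
      _ = t⁻¹ := mul_one _
      _ ≤ x⁻¹ := by
          apply inv_anti₀ hx (le_of_lt ht)
  have hμIoi_le : ∀ x : ℝ, 0 < x → μ (Ioi x) ≤ ENNReal.ofReal x⁻¹ := by
    intro x hx
    rw [hμdef, withDensity_apply _ measurableSet_Ioi]
    calc ∫⁻ t in Ioi x, G t ∂ν ≤ ∫⁻ _ in Ioi x, ENNReal.ofReal x⁻¹ ∂ν :=
          setLIntegral_mono measurable_const (hGle x hx)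
      _ = ENNReal.ofReal x⁻¹ * ν (Ioi x) := setLIntegral_const _ _
      _ ≤ ENNReal.ofReal x⁻¹ * 1 := by
          apply mul_le_mul_right
          rw [hνdef, Measure.restrict_apply measurableSet_Ioi]
          calc volume (Ioi x ∩ Ioo 0 1) ≤ volume (Ioo (0:ℝ) 1) :=
                measure_mono inter_subset_right
            _ = 1 := by rw [Real.volume_Ioo]; norm_num
      _ = ENNReal.ofReal x⁻¹ := mul_one _
  have hμIoi_fin : ∀ x : ℝ, 0 < x → μ (Ioi x) ≠ ⊤ := fun x hx =>
    ne_top_of_le_ne_top ENNReal.ofReal_ne_top (hμIoi_le x hx)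
  have hμIoc_le : ∀ x y : ℝ, 0 < x →
      μ (Ioc x y) ≤ ENNReal.ofReal x⁻¹ * ENNReal.ofReal (y - x) := by
    intro x y hx
    rw [hμdef, withDensity_apply _ measurableSet_Ioc]
    calc ∫⁻ t in Ioc x y, G t ∂ν ≤ ∫⁻ _ in Ioc x y, ENNReal.ofReal x⁻¹ ∂ν :=
          setLIntegral_mono measurable_const (fun t ht => hGle x hx t ht.1)
      _ = ENNReal.ofReal x⁻¹ * ν (Ioc x y) := setLIntegral_const _ _
      _ ≤ ENNReal.ofReal x⁻¹ * ENNReal.ofReal (y - x) := by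
          apply mul_le_mul_right
          rw [hνdef, Measure.restrict_apply measurableSet_Ioc]
          calc volume (Ioc x y ∩ Ioo 0 1) ≤ volume (Ioc x y) :=
                measure_mono inter_subset_left
            _ = ENNReal.ofReal (y - x) := Real.volume_Ioc
  have hμIoc_fin : ∀ x y : ℝ, 0 < x → μ (Ioc x y) ≠ ⊤ := fun x y hx =>
    ne_top_of_le_ne_top (by finiteness) (hμIoc_le x y hx)
  -- divergence of μ
  have hw'ν : ∀ᵐ t ∂ν, w' t = w t :=
    ae_restrict_of_ae_restrict_of_subset Ioo_subset_Ioi_self hw'w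
  have hdiv' : ∫⁻ t in Ioo (0:ℝ) 1, G t = ⊤ := by
    rw [← hdiv]
    apply lintegral_congr_ae
    filter_upwards [hw'ν] with t ht
    rw [hGdef]; simp only [ht]
  have hμIoi0 : μ (Ioi (0:ℝ)) = ⊤ := by
    rw [hμdef, withDensity_apply _ measurableSet_Ioi, hνdef,
      Measure.restrict_restrict measurableSet_Ioi,
      inter_eq_right.mpr Ioo_subset_Ioi_self]
    exact hdiv'
  -- intermediate value property: every value is attained
  have hexist : ∀ s : ℝ, 0 ≤ s → ∃ x, x ∈ Ioc (0:ℝ) 1 ∧ μ (Ioi x) = ENNReal.ofReal s := by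
    intro s hs
    -- find ε with μ (Ioi ε) large
    have hsup : ⨆ n : ℕ, μ (Ioi ((1:ℝ)/(n+1))) = ⊤ := by
      have hdir : Directed (· ⊆ ·) (fun n : ℕ => Ioi ((1:ℝ)/(n+1))) := by
        apply Monotone.directed_le
        intro m n hmn
        apply Ioi_subset_Ioi
        apply div_le_div_of_nonneg_left one_pos.le (by positivity)
        exact_mod_cast by omega
      have hUn : ⋃ n : ℕ, Ioi ((1:ℝ)/(n+1)) = Ioi (0:ℝ) := by
        apply subset_antisymm
        · exact iUnion_subset fun n => Ioi_subset_Ioi (by positivity)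
        · intro t ht
          obtain ⟨n, hn⟩ := exists_nat_one_div_lt (mem_Ioi.mp ht)
          exact mem_iUnion.2 ⟨n, hn⟩
      rw [← hμIoi0, ← hUn]
      exact (Directed.measure_iUnion (μ := μ) hdir).symm
    obtain ⟨n, hn⟩ : ∃ n : ℕ, ENNReal.ofReal s < μ (Ioi ((1:ℝ)/(n+1))) := by
      rw [← lt_iSup_iff, hsup]; exact ENNReal.ofReal_lt_top
    set ε : ℝ := (1:ℝ)/(n+1) with hεdef
    have hε0 : 0 < ε := by positivity
    have hε1 : ε ≤ 1 := by
      rw [hεdef, div_le_one (by positivity)]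
      exact_mod_cast by omega
    set Fr : ℝ → ℝ := fun x => (μ (Ioi x)).toReal with hFrdef
    have hFr1 : Fr 1 = 0 := by
      have : μ (Ioi (1:ℝ)) = 0 := by
        rw [hμdef, withDensity_apply _ measurableSet_Ioi]
        apply setLIntegral_measure_zero
        rw [hνdef, Measure.restrict_apply measurableSet_Ioi]
        have : Ioi (1:ℝ) ∩ Ioo 0 1 = ∅ := by
          ext t; simp only [mem_inter_iff, mem_Ioi, mem_Ioo, mem_empty_iff_false, iff_false]
          rintro ⟨h1, _, h2⟩; linarith
        rw [this, measure_empty]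
      rw [hFrdef]; simp [this]
    have hkey : ∀ x ∈ Icc ε 1, ∀ y ∈ Icc ε 1, x ≤ y →
        dist (Fr x) (Fr y) ≤ ε⁻¹ * dist x y := by
      intro x hx y hy hxy
      have hx0 : 0 < x := lt_of_lt_of_le hε0 hx.1
      have hy0 : 0 < y := lt_of_lt_of_le hε0 hy.1
      have hsplit : μ (Ioi x) = μ (Ioc x y) + μ (Ioi y) := by
        rw [← measure_union Ioc_disjoint_Ioi_same measurableSet_Ioi,
          Ioc_union_Ioi_eq_Ioi hxy]
      have hX : Fr x = (μ (Ioc x y)).toReal + Fr y := by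
        rw [hFrdef]; simp only
        rw [hsplit, ENNReal.toReal_add (hμIoc_fin x y hx0) (hμIoi_fin y hy0)]
      have hIoc : (μ (Ioc x y)).toReal ≤ ε⁻¹ * (y - x) := by
        calc (μ (Ioc x y)).toReal
            ≤ (ENNReal.ofReal x⁻¹ * ENNReal.ofReal (y - x)).toReal := by
              apply ENNReal.toReal_mono (by finiteness) (hμIoc_le x y hx0)
          _ = x⁻¹ * (y - x) := by
              rw [ENNReal.toReal_mul, ENNReal.toReal_ofReal (by positivity),
                ENNReal.toReal_ofReal (by linarith)]
          _ ≤ ε⁻¹ * (y - x) := by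
              apply mul_le_mul_of_nonneg_right _ (by linarith)
              exact inv_anti₀ hε0 hx.1
      rw [Real.dist_eq, Real.dist_eq, hX]
      rw [abs_of_nonneg (by
        have : (0:ℝ) ≤ (μ (Ioc x y)).toReal := ENNReal.toReal_nonneg
        linarith)]
      rw [abs_of_nonpos (by linarith)]
      calc (μ (Ioc x y)).toReal + Fr y - Fr y = (μ (Ioc x y)).toReal := by ring
        _ ≤ ε⁻¹ * (y - x) := hIoc
        _ = ε⁻¹ * -(x - y) := by ring
    have hcont : ContinuousOn Fr (Icc ε 1) := by
      apply LipschitzOnWith.continuousOn (K := Real.toNNReal ε⁻¹)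
      apply LipschitzOnWith.of_dist_le_mul
      intro x hx y hy
      have hcoe : (Real.toNNReal ε⁻¹ : ℝ) = ε⁻¹ := Real.coe_toNNReal _ (by positivity)
      rw [hcoe]
      rcases le_total x y with h | h
      · exact hkey x hx y hy h
      · rw [dist_comm (Fr x), dist_comm x]
        exact hkey y hy x hx h
    have hsle : s ≤ Fr ε := by
      have := ENNReal.toReal_mono (hμIoi_fin ε hε0) hn.le
      rwa [ENNReal.toReal_ofReal hs] at this
    have hmem : s ∈ Icc (Fr 1) (Fr ε) := ⟨by rw [hFr1]; exact hs, hsle⟩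
    obtain ⟨x, hx, hFx⟩ := intermediate_value_Icc' hε1 hcont hmem
    refine ⟨x, ⟨lt_of_lt_of_le hε0 hx.1, hx.2⟩, ?_⟩
    rw [← hFx, hFrdef]
    simp only
    rw [ENNReal.ofReal_toReal (hμIoi_fin x (lt_of_lt_of_le hε0 hx.1))]
  -- the sequence a k
  have hex2 : ∀ k : ℕ, ∃ x, x ∈ Ioc (0:ℝ) 1 ∧ μ (Ioi x) = ENNReal.ofReal (2^k - 1) := by
    intro k
    apply hexist
    have : (1:ℝ) ≤ 2^k := one_le_pow₀ (by norm_num)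
    linarith
  choose a ha1 ha2 using hex2
  have hapos : ∀ k, 0 < a k := fun k => (ha1 k).1
  have haanti : StrictAnti a := by
    apply strictAnti_nat_of_succ_lt
    intro k
    by_contra h
    push_neg at h
    have hsub : Ioi (a (k+1)) ⊆ Ioi (a k) := Ioi_subset_Ioi h
    have := measure_mono (μ := μ) hsub
    rw [ha2, ha2] at this
    have h2k : (1:ℝ) ≤ 2^k := one_le_pow₀ (by norm_num)
    rw [ENNReal.ofReal_le_ofReal_iff (by linarith)] at this
    have : (2:ℝ)^(k+1) ≤ 2^k := by linarith
    rw [pow_succ] at this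
    linarith
  set B : ℕ → Set ℝ := fun k => Ioc (a (k+1)) (a k) with hBdef
  have hBmeas : ∀ k, MeasurableSet (B k) := fun k => measurableSet_Ioc
  have hBsub : ∀ k, B k ⊆ Ioc 0 1 := fun k t ht =>
    ⟨lt_trans (hapos (k+1)) ht.1, le_trans ht.2 (ha1 k).2⟩
  have hBdisj' : ∀ i j, i < j → Disjoint (B i) (B j) := by
    intro i j hij
    apply Set.disjoint_left.mpr
    intro t hti htj
    have h1 : a (i+1) < t := hti.1
    have h2 : t ≤ a j := htj.2
    have h3 : a j ≤ a (i+1) := haanti.antitone (by omega)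
    linarith
  have hBdisj : Pairwise (Function.onFun Disjoint B) := fun i j hij =>
    hij.lt_or_gt.elim (hBdisj' i j) (fun h => (hBdisj' j i h).symm)
  have hμB : ∀ k, μ (B k) = ENNReal.ofReal (2^k) := by
    intro k
    have hle : a (k+1) ≤ a k := (haanti (Nat.lt_succ_self k)).le
    have hsplit : μ (Ioi (a (k+1))) = μ (B k) + μ (Ioi (a k)) := by
      rw [hBdef, ← measure_union Ioc_disjoint_Ioi_same measurableSet_Ioi,
        Ioc_union_Ioi_eq_Ioi hle]
    rw [ha2, ha2] at hsplit
    have h2k : (1:ℝ) ≤ 2^k := one_le_pow₀ (by norm_num)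
    have : ENNReal.ofReal (2^k) = ENNReal.ofReal (2^(k+1) - 1) - ENNReal.ofReal (2^k - 1) := by
      rw [← ENNReal.ofReal_sub _ (by linarith)]
      congr 1
      rw [pow_succ]
      ring
    rw [this, hsplit, ENNReal.add_sub_cancel_right ENNReal.ofReal_ne_top]
  have hasmall : ∀ t0 : ℝ, 0 < t0 → ∃ K, a K < t0 := by
    intro t0 ht0
    by_contra h
    push_neg at h
    set r : ℝ := (μ (Ioi t0)).toReal with hrdef
    obtain ⟨k, hk⟩ := pow_unbounded_of_one_lt (r + 1) (one_lt_two (α := ℝ))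
    have hsub : Ioi (a k) ⊆ Ioi t0 := Ioi_subset_Ioi (h k)
    have hle := measure_mono (μ := μ) hsub
    rw [ha2] at hle
    have := (ENNReal.ofReal_le_iff_le_toReal (hμIoi_fin t0 ht0)).1 hle
    rw [← hrdef] at this
    linarith
  -- the step function H
  set H : ℝ → ℝ≥0∞ := fun t => ∑' k, (B k).indicator (fun _ => (2:ℝ≥0∞)⁻¹ ^ k) t with hHdef
  have hHmeas : Measurable H :=
    Measurable.ennreal_tsum fun k => measurable_const.indicator (hBmeas k)
  have hHval : ∀ k, ∀ t ∈ B k, H t = (2:ℝ≥0∞)⁻¹ ^ k := by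
    intro k t ht
    rw [hHdef]
    simp only
    rw [tsum_eq_single k]
    · exact indicator_of_mem ht _
    · intro j hjk
      apply indicator_of_notMem
      exact Set.disjoint_right.mp (hBdisj hjk) ht
  have hHzero : ∀ t, (∀ k, t ∉ B k) → H t = 0 := by
    intro t ht
    rw [hHdef]
    simp only
    convert tsum_zero with k
    exact indicator_of_notMem (ht k) _
  have hHne : ∀ t, H t ≠ ⊤ := by
    intro t
    apply ne_top_of_le_ne_top (b := ∑' k : ℕ, (2:ℝ≥0∞)⁻¹ ^ k)
    · rw [ENNReal.tsum_geometric, ENNReal.one_sub_inv_two]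
      simp
    · exact ENNReal.tsum_le_tsum fun k => Set.indicator_le (fun _ _ => le_rfl) t
  -- the function f
  set f : ℝ → ℝ := fun t => (H t * G t).toReal with hfdef
  have hfmeas : Measurable f := (hHmeas.mul hGmeas).ennreal_toReal
  have hfnn : ∀ t, 0 ≤ f t := fun t => ENNReal.toReal_nonneg
  have hfofReal : ∀ t, ENNReal.ofReal (f t) = H t * G t := fun t =>
    ENNReal.ofReal_toReal (ENNReal.mul_ne_top (hHne t) ENNReal.ofReal_ne_top)
  -- value of f on B k
  have hgnn : ∀ t : ℝ, 0 < t → 0 ≤ t⁻¹ * w' t ^ (-σ) := by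
    intro t ht
    have := Real.rpow_nonneg (hw'pos t).le (-σ)
    positivity
  have hfval : ∀ k, ∀ t ∈ B k, f t = (2:ℝ)⁻¹ ^ k * (t⁻¹ * w' t ^ (-σ)) := by
    intro k t ht
    have htpos : 0 < t := lt_trans (hapos (k+1)) ht.1
    rw [hfdef]
    simp only
    rw [hHval k t ht, hGdef]
    simp only
    rw [ENNReal.toReal_mul, ENNReal.toReal_pow, ENNReal.toReal_inv,
      ENNReal.toReal_ofNat, ENNReal.toReal_ofReal (hgnn t htpos)]
  -- divergence
  have hdiv_t0 : ∀ t0 : ℝ, 0 < t0 → t0 ≤ 1 →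
      (∫⁻ t in Ioo (0:ℝ) t0, ENNReal.ofReal (f t)) = ⊤ := by
    intro t0 ht0 ht01
    obtain ⟨K, hK⟩ := hasmall t0 ht0
    have hsub : ∀ k : ℕ, B (K + k) ⊆ Ioo 0 t0 := by
      intro k t ht
      refine ⟨lt_trans (hapos (K+k+1)) ht.1, ?_⟩
      calc t ≤ a (K + k) := ht.2
        _ ≤ a K := haanti.antitone (by omega)
        _ < t0 := hK
    have hcalc : ∀ k : ℕ, (∫⁻ t in B (K + k), H t * G t) = 1 := by
      intro k
      have h1 : (∫⁻ t in B (K + k), H t * G t)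
          = ∫⁻ t in B (K + k), (2:ℝ≥0∞)⁻¹ ^ (K+k) * G t := by
        apply setLIntegral_congr_fun (hBmeas (K+k))
        intro t ht
        simp only [hHval (K+k) t ht]
      rw [h1, lintegral_const_mul _ hGmeas]
      have h2 : (∫⁻ t in B (K + k), G t) = μ (B (K + k)) := by
        rw [hμdef, withDensity_apply _ (hBmeas (K+k)), hνdef,
          Measure.restrict_restrict (hBmeas (K+k)),
          inter_eq_left.mpr (subset_trans (hsub k) (Ioo_subset_Ioo le_rfl ht01))]
      rw [h2, hμB]
      have h3 : ENNReal.ofReal ((2:ℝ)^(K+k)) = (2:ℝ≥0∞) ^ (K+k) := by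
        rw [ENNReal.ofReal_pow (by norm_num)]
        norm_num
      rw [h3, ← mul_pow, ENNReal.inv_mul_cancel (by norm_num) (by norm_num), one_pow]
    have hge : (∫⁻ t in Ioo (0:ℝ) t0, ENNReal.ofReal (f t))
        ≥ ∫⁻ t in ⋃ k : ℕ, B (K + k), H t * G t := by
      simp only [hfofReal]
      exact lintegral_mono_set (iUnion_subset hsub)
    rw [lintegral_iUnion (fun k => hBmeas (K+k))
      (fun i j hij => hBdisj (show K+i ≠ K+j by omega))] at hge
    simp only [hcalc] at hge
    rw [ENNReal.tsum_const_eq_top_of_ne_zero one_ne_zero] at hge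
    exact top_le_iff.mp hge
  refine ⟨f, hfmeas, hfnn, hdiv_t0 1 one_pos le_rfl, ?_, fun t0 ht0 => hdiv_t0 t0 ht0.1 ht0.2.le⟩
  -- finiteness
  have hcong : ∀ᵐ t ∂ν, ENNReal.ofReal (f t ^ θ * t ^ (θ-1) * w t)
      = ∑' k, (B k).indicator (fun _ => ENNReal.ofReal (((2:ℝ)⁻¹ ^ k) ^ θ)) t * G t := by
    filter_upwards [hw'ν, ae_restrict_mem measurableSet_Ioo] with t htw ht
    by_cases hex : ∃ k, t ∈ B k
    · obtain ⟨k, hk⟩ := hex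
      have htpos : 0 < t := ht.1
      rw [hfval k t hk, ← htw]
      rw [stmt5_alg hθ htpos (hw'1 t) (by positivity)]
      have hrhs : ∑' j, (B j).indicator (fun _ => ENNReal.ofReal (((2:ℝ)⁻¹ ^ j) ^ θ)) t * G t
          = ENNReal.ofReal (((2:ℝ)⁻¹ ^ k) ^ θ) * G t := by
        rw [ENNReal.tsum_mul_right]
        congr 1
        rw [tsum_eq_single k]
        · exact indicator_of_mem hk _
        · intro j hjk
          exact indicator_of_notMem (Set.disjoint_right.mp (hBdisj hjk) hk) _
      rw [hrhs, hGdef]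
      simp only
      rw [← ENNReal.ofReal_mul (by positivity)]
    · push_neg at hex
      have hf0 : f t = 0 := by
        rw [hfdef]; simp only
        rw [hHzero t hex, zero_mul, ENNReal.toReal_zero]
      rw [hf0, Real.zero_rpow (by linarith), zero_mul, zero_mul, ENNReal.ofReal_zero]
      symm
      convert tsum_zero with k
      rw [indicator_of_notMem (hex k), zero_mul]
  rw [lintegral_congr_ae hcong]
  rw [lintegral_tsum
    (f := fun k t => (B k).indicator (fun _ => ENNReal.ofReal (((2:ℝ)⁻¹ ^ k) ^ θ)) t * G t) (fun k =>
    ((measurable_const.indicator (hBmeas k)).mul hGmeas).aemeasurable)]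
  have hterm : ∀ k : ℕ, (∫⁻ t, (B k).indicator (fun _ => ENNReal.ofReal (((2:ℝ)⁻¹ ^ k) ^ θ)) t * G t ∂ν)
      = (ENNReal.ofReal ((2:ℝ) ^ (1 - θ))) ^ k := by
    intro k
    set d : ℝ≥0∞ := ENNReal.ofReal (((2:ℝ)⁻¹ ^ k) ^ θ) with hddef
    have h1 : (fun t => (B k).indicator (fun _ => d) t * G t)
        = (B k).indicator (fun t => d * G t) := by
      funext t
      by_cases ht : t ∈ B k
      · rw [indicator_of_mem ht, indicator_of_mem ht]
      · rw [indicator_of_notMem ht, indicator_of_notMem ht, zero_mul]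
    rw [h1, lintegral_indicator (hBmeas k), lintegral_const_mul _ hGmeas]
    have h2 : (∫⁻ t in B k, G t ∂ν) = μ (B k) := (withDensity_apply _ (hBmeas k)).symm
    rw [h2, hμB]
    -- real computation
    have hreal : ((2:ℝ)⁻¹ ^ k) ^ θ * 2 ^ k = ((2:ℝ) ^ (1 - θ)) ^ k := by
      have h2 : (0:ℝ) ≤ 2 := by norm_num
      have l1 : ((2:ℝ)⁻¹ ^ k) ^ θ = (2:ℝ) ^ (((-1:ℝ) * (k:ℝ)) * θ) := by
        rw [← Real.rpow_natCast ((2:ℝ)⁻¹) k,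
          show (2:ℝ)⁻¹ = (2:ℝ) ^ (-1:ℝ) from (Real.rpow_neg_one 2).symm,
          ← Real.rpow_mul h2, ← Real.rpow_mul h2]
      have l2 : ((2:ℝ) ^ (1-θ)) ^ k = (2:ℝ) ^ ((1-θ) * (k:ℝ)) := by
        rw [← Real.rpow_natCast ((2:ℝ)^(1-θ)) k, ← Real.rpow_mul h2]
      rw [l1, l2, ← Real.rpow_natCast (2:ℝ) k, ← Real.rpow_add (by norm_num : (0:ℝ) < 2)]
      congr 1
      ring
    rw [hddef, ← ENNReal.ofReal_pow (by positivity), ← ENNReal.ofReal_mul (by positivity), hreal,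
      ENNReal.ofReal_pow (by positivity)]
  simp only [hterm]
  rw [ENNReal.tsum_geometric]
  apply ENNReal.inv_lt_top.2
  apply tsub_pos_of_lt
  apply ENNReal.ofReal_lt_one.2
  exact Real.rpow_lt_one_of_one_lt_of_neg one_lt_two (by linarith)
end

section
/- Let (Y, d_Y) be a complete metric space, h : Y → V an isometric embedding into a Banach space V, and u : Ω → Y a measurable map on a bounded domain Ω ⊂ X with boundary measure ℋ. If the composition h∘u has a trace T(h∘u) on ∂Ω in the Banach-valued sense, then u has a trace Tu on ∂Ω in the metric sense, and moreover h(Tu(x)) = T(h∘u)(x) for ℋ-a.e. x ∈ ∂Ω. -/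
open MeasureTheory Set Metric Filter

/-- `T` is the trace value of `u` at the boundary point `x`:
the averages of `d(u, T)` over `B(x,r) ∩ Ω` tend to `0` as `r → 0⁺`. -/
def HasTraceAt {X Z : Type*} [MetricSpace X] [MeasurableSpace X]
    [PseudoEMetricSpace Z] (μ : Measure X) (Ω : Set X) (u : X → Z) (x : X)
    (T : Z) : Prop :=
  Tendsto (fun r : ℝ =>
      (μ (ball x r ∩ Ω))⁻¹ * ∫⁻ y in ball x r ∩ Ω, edist (u y) T ∂μ)
    (nhdsWithin 0 (Ioi 0)) (nhds 0)

/-- Let `Y` be a complete metric space, `h : Y → V` an isometric embedding into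
a Banach space `V`, and `u : Ω → Y` measurable. If `h ∘ u` has a trace on `∂Ω`
(in the Banach-valued sense), then `u` has a trace on `∂Ω` in the metric sense,
and the two traces are intertwined by `h`. -/
theorem stmt10 {X Y V : Type*} [MetricSpace X] [MeasurableSpace X] [BorelSpace X]
    [MetricSpace Y] [MeasurableSpace Y] [BorelSpace Y] [CompleteSpace Y] [NormedAddCommGroup V]
    (μ H : Measure X) [SigmaFinite H] (Ω : Set X)
    (hΩo : IsOpen Ω) (hΩb : Bornology.IsBounded Ω)
    (hpos : ∀ x ∈ frontier Ω, ∀ r > (0:ℝ),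
      0 < μ (ball x r ∩ Ω) ∧ μ (ball x r ∩ Ω) < ⊤)
    (h : Y → V) (hiso : Isometry h) (u : X → Y) (hmeas : Measurable u)
    (T : X → V)
    (hT : ∀ᵐ x ∂(H.restrict (frontier Ω)),
      HasTraceAt μ Ω (fun y => h (u y)) x (T x)) :
    ∀ᵐ x ∂(H.restrict (frontier Ω)),
      ∃ S : Y, h S = T x ∧ HasTraceAt μ Ω u x S := by
  filter_upwards [hT, ae_restrict_mem isClosed_frontier.measurableSet] with x hx hxf
  -- `T x` belongs to the closure of the range of `h`, which is closed.
  have hclosed : IsClosed (Set.range h) := hiso.isClosedEmbedding.isClosed_range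
  have hmem : T x ∈ Set.range h := by
    rw [← hclosed.closure_eq]
    rw [EMetric.mem_closure_iff]
    intro ε hε
    by_contra hcon
    push_neg at hcon
    -- eventually the average is < ε
    have hev : ∀ᶠ r in nhdsWithin (0:ℝ) (Ioi 0),
        (μ (ball x r ∩ Ω))⁻¹ * ∫⁻ y in ball x r ∩ Ω,
          edist (h (u y)) (T x) ∂μ < ε := by
      exact hx.eventually_lt_const hε
    obtain ⟨r, hr, hrmem⟩ := (hev.and eventually_mem_nhdsWithin).exists
    have hr0 : (0:ℝ) < r := hrmem
    obtain ⟨hμpos, hμlt⟩ := hpos x hxf r hr0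
    -- lower bound on the integral
    have hlow : ε * μ (ball x r ∩ Ω) ≤
        ∫⁻ y in ball x r ∩ Ω, edist (h (u y)) (T x) ∂μ := by
      rw [← setLIntegral_const]
      refine setLIntegral_mono' (measurableSet_ball.inter hΩo.measurableSet) ?_
      intro y _
      have := hcon (h (u y)) ⟨u y, rfl⟩
      simpa [edist_comm] using this
    have : ε ≤ (μ (ball x r ∩ Ω))⁻¹ * ∫⁻ y in ball x r ∩ Ω,
        edist (h (u y)) (T x) ∂μ := by
      calc ε = (μ (ball x r ∩ Ω))⁻¹ * (ε * μ (ball x r ∩ Ω)) := by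
              rw [mul_comm ε, ← mul_assoc, ENNReal.inv_mul_cancel hμpos.ne' hμlt.ne,
                one_mul]
        _ ≤ _ := mul_le_mul_right hlow _
    exact absurd hr (not_lt.mpr this)
  obtain ⟨S, hS⟩ := hmem
  refine ⟨S, hS, ?_⟩
  unfold HasTraceAt
  have : (fun r : ℝ =>
      (μ (ball x r ∩ Ω))⁻¹ * ∫⁻ y in ball x r ∩ Ω, edist (u y) S ∂μ)
    = (fun r : ℝ =>
      (μ (ball x r ∩ Ω))⁻¹ * ∫⁻ y in ball x r ∩ Ω, edist (h (u y)) (T x) ∂μ) := by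
    funext r
    congr 1
    refine lintegral_congr fun y => ?_
    rw [← hS, hiso.edist_eq]
  rw [this]
  exact hx
end

section
/- Let Ω ⊂ X be a John domain with John constant c_J ∈ (0,1] and John center a, and fix λ ≥ 1. For z ∈ ∂Ω joined to a by an arc-length parametrized John curve γ_z, set δ = dist(a, ∂Ω), t_k = δ(1 − c_J/(2λ))^k, r_k = (c_J/(2λ)) t_k, and B_z^k = B(γ_z(t_k), r_k). Then with β_1 = c_J/2, α = 2 − c_J/(2λ) and β_2 = αλ + 2λ/c_J, every point x ∈ αλ B_z^k satisfies β_1 r_k ≤ d(x, z) ≤ β_2 r_k and β_1 r_k ≤ dist(x, ∂Ω) ≤ β_2 r_k, and moreover B_z^{k+1} ⊆ α B_z^k. -/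
open Metric Set

/-- Chain-of-balls geometry in a John domain. Let `Ω ⊂ X` be a John domain with
constant `c_J ∈ (0,1]` and center `a`, `λ ≥ 1`, and let `z ∈ ∂Ω` be joined to
`a` by an arc-length parametrized John curve `γ_z`. With
`δ = dist(a,∂Ω)`, `t_k = δ(1 − c_J/(2λ))^k`, `r_k = (c_J/(2λ)) t_k`,
`B_z^k = B(γ_z(t_k), r_k)`, `β₁ = c_J/2`, `α = 2 − c_J/(2λ)`,
`β₂ = αλ + 2λ/c_J`, every `x ∈ αλ B_z^k` satisfies
`β₁ r_k ≤ d(x,z) ≤ β₂ r_k` and `β₁ r_k ≤ dist(x,∂Ω) ≤ β₂ r_k`, and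
`B_z^{k+1} ⊆ α B_z^k`. -/
theorem stmt12 {X : Type*} [MetricSpace X] (Ω : Set X) (hΩo : IsOpen Ω)
    (a : X) (ha : a ∈ Ω) (cJ lam : ℝ) (hcJ : 0 < cJ) (hcJ1 : cJ ≤ 1)
    (hlam : 1 ≤ lam) (z : X) (hz : z ∈ frontier Ω)
    (ℓ : ℝ) (hℓ : 0 ≤ ℓ) (γ : ℝ → X) (hγ0 : γ 0 = z) (hγℓ : γ ℓ = a)
    (hlip : LipschitzOnWith 1 γ (Icc 0 ℓ))
    (hJohn : ∀ t ∈ Icc (0:ℝ) ℓ, cJ * t ≤ infDist (γ t) Ωᶜ) :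
    ∀ k : ℕ,
      (∀ x ∈ ball (γ (infDist a (frontier Ω) * (1 - cJ/(2*lam)) ^ k))
          ((2 - cJ/(2*lam)) * lam *
            (cJ/(2*lam) * (infDist a (frontier Ω) * (1 - cJ/(2*lam)) ^ k))),
        (cJ/2) * (cJ/(2*lam) * (infDist a (frontier Ω) * (1 - cJ/(2*lam)) ^ k))
            ≤ dist x z ∧
        dist x z ≤ ((2 - cJ/(2*lam)) * lam + 2*lam/cJ) *
            (cJ/(2*lam) * (infDist a (frontier Ω) * (1 - cJ/(2*lam)) ^ k)) ∧
        (cJ/2) * (cJ/(2*lam) * (infDist a (frontier Ω) * (1 - cJ/(2*lam)) ^ k))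
            ≤ infDist x (frontier Ω) ∧
        infDist x (frontier Ω) ≤ ((2 - cJ/(2*lam)) * lam + 2*lam/cJ) *
            (cJ/(2*lam) * (infDist a (frontier Ω) * (1 - cJ/(2*lam)) ^ k))) ∧
      ball (γ (infDist a (frontier Ω) * (1 - cJ/(2*lam)) ^ (k+1)))
          (cJ/(2*lam) * (infDist a (frontier Ω) * (1 - cJ/(2*lam)) ^ (k+1)))
        ⊆ ball (γ (infDist a (frontier Ω) * (1 - cJ/(2*lam)) ^ k))
          ((2 - cJ/(2*lam)) *
            (cJ/(2*lam) * (infDist a (frontier Ω) * (1 - cJ/(2*lam)) ^ k))) := by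

  intro k
  have hlam0 : (0:ℝ) < lam := by linarith
  set r : ℝ := cJ/(2*lam) with hrdef
  set δ : ℝ := infDist a (frontier Ω) with hδdef
  have hr0 : 0 < r := by rw [hrdef]; positivity
  have hcJr : cJ = 2*lam*r := by rw [hrdef]; field_simp
  have hr_half : r ≤ 1/2 := by
    rw [hrdef, div_le_div_iff₀ (by linarith) (by norm_num)]
    nlinarith
  have h1r : 0 < 1 - r := by linarith
  have hδ0 : 0 ≤ δ := infDist_nonneg
  have hdaz : dist a z ≤ ℓ := by
    rw [← hγℓ, ← hγ0]
    have := hlip.dist_le_mul ℓ ⟨hℓ, le_refl ℓ⟩ 0 ⟨le_refl 0, hℓ⟩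
    simpa [Real.dist_eq, abs_of_nonneg hℓ] using this
  have hδℓ : δ ≤ ℓ := le_trans (infDist_le_dist_of_mem hz) hdaz
  have hfront : frontier Ω ⊆ Ωᶜ := by
    intro x hx
    rw [hΩo.frontier_eq] at hx
    exact hx.2
  have hJF : ∀ t ∈ Icc (0:ℝ) ℓ, cJ * t ≤ infDist (γ t) (frontier Ω) := fun t ht =>
    (hJohn t ht).trans (infDist_le_infDist_of_subset hfront ⟨z, hz⟩)
  have hdz : ∀ t ∈ Icc (0:ℝ) ℓ, dist (γ t) z ≤ t := by
    intro t ht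
    rw [← hγ0]
    have := hlip.dist_le_mul t ht 0 ⟨le_refl 0, hℓ⟩
    simpa [Real.dist_eq, abs_of_nonneg ht.1] using this
  set T : ℝ := δ * (1-r)^k with hTdef
  set T' : ℝ := δ * (1-r)^(k+1) with hT'def
  have hT0 : 0 ≤ T := by rw [hTdef]; positivity
  have hTδ : T ≤ δ := by
    rw [hTdef]
    nlinarith [pow_le_one₀ (le_of_lt h1r) (by linarith : 1 - r ≤ 1) (n := k)]
  have hTmem : T ∈ Icc (0:ℝ) ℓ := ⟨hT0, le_trans hTδ hδℓ⟩
  have hT'eq : T' = T * (1-r) := by rw [hT'def, hTdef]; ring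
  have hT'0 : 0 ≤ T' := by rw [hT'def]; positivity
  have hT'T : T' ≤ T := by nlinarith
  have hT'mem : T' ∈ Icc (0:ℝ) ℓ := ⟨hT'0, le_trans (hT'T.trans hTδ) hδℓ⟩
  constructor
  · intro x hx
    rw [mem_ball] at hx
    have hlow : cJ/2 * (r*T) ≤ infDist x (frontier Ω) := by
      have h1 := infDist_le_infDist_add_dist (x := γ T) (y := x) (s := frontier Ω)
      have h2 := hJF T hTmem
      have key : (cJ/2)*(r*T) = cJ*T - (2-r)*lam*(r*T) := by rw [hcJr]; ring
      rw [dist_comm (γ T) x] at h1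
      linarith
    have hxub : dist x z ≤ ((2-r)*lam + 2*lam/cJ) * (r*T) := by
      have h3 := hdz T hTmem
      have h4 := dist_triangle x (γ T) z
      have key2 : ((2-r)*lam + 2*lam/cJ)*(r*T) = (2-r)*lam*(r*T) + (2*lam/cJ*r)*T := by
        ring
      have h5 : 2*lam/cJ*r = 1 := by rw [hcJr]; field_simp
      rw [h5, one_mul] at key2
      linarith
    refine ⟨le_trans hlow (infDist_le_dist_of_mem hz), hxub,
      hlow, le_trans (infDist_le_dist_of_mem hz) hxub⟩
  · intro x hx
    rw [mem_ball] at hx ⊢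
    have hlipT : dist (γ T') (γ T) ≤ T - T' := by
      have := hlip.dist_le_mul T' hT'mem T hTmem
      simpa [Real.dist_eq, abs_of_nonpos (by linarith : T' - T ≤ 0)] using this
    have h4 := dist_triangle x (γ T') (γ T)
    have : dist x (γ T) < r * T' + (T - T') := by linarith
    calc dist x (γ T) < r * T' + (T - T') := this
      _ = (2-r) * (r*T) := by rw [hT'eq]; ring
end
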